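/- Let X₁, X₂ be independent random variables uniformly distributed on the unit circle in ℂ and let a₁, a₂ be nonzero complex numbers. Then a₁X₁ + a₂X₂ has an absolutely continuous law on ℝ² ≅ ℂ. -/

import Mathlib

/-!
The law of `a₁X₁ + a₂X₂` is the image of (a multiple of) Lebesgue measure on a square under
`F(θ₁, θ₂) = a₁ exp(iθ₁) + a₂ exp(iθ₂)`. The Jacobian of `F` is `|a₁a₂| sin(arg(ā₁a₂) + θ₂ - θ₁)`,
which vanishes only on countably many lines. Off that null set `F` is locally injective, and on
each injectivity piece `s` the change of variables inequality `∫ₛ |det DF| ≤ λ(F(s))` shows that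
`F` pulls null sets back to null sets.
-/

open MeasureTheory ProbabilityTheory
open scoped ENNReal Real

/-- The uniform probability measure on the unit circle in `ℂ`. -/
noncomputable def circleUniform : Measure ℂ :=
  Measure.map (fun θ : ℝ => Complex.exp (θ * Complex.I))
    ((ENNReal.ofReal (2 * π))⁻¹ • volume.restrict (Set.Ico 0 (2 * π)))

open Set

theorem HasStrictFDerivAt.exists_isOpen_injOn_of_det_ne_zero {𝕜 E : Type*}
    [NontriviallyNormedField 𝕜] [CompleteSpace 𝕜] [NormedAddCommGroup E] [NormedSpace 𝕜 E]
    [FiniteDimensional 𝕜 E] {f : E → E} {f' : E →L[𝕜] E} {x : E}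
    (hf : HasStrictFDerivAt f f' x) (hdet : f'.det ≠ 0) :
    ∃ u : Set E, IsOpen u ∧ x ∈ u ∧ InjOn f u := by
  have := FiniteDimensional.complete 𝕜 E
  rw [← f'.coe_toContinuousLinearEquivOfDetNeZero hdet] at hf
  refine ⟨_, (hf.toOpenPartialHomeomorph f).open_source, hf.mem_toOpenPartialHomeomorph_source, ?_⟩
  simpa only [hf.toOpenPartialHomeomorph_coe] using (hf.toOpenPartialHomeomorph f).injOn

section Jacobian

variable {E : Type*} [NormedAddCommGroup E] [NormedSpace ℝ E] [FiniteDimensional ℝ E]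
  [MeasurableSpace E] [BorelSpace E] (μ : Measure E) [μ.IsAddHaarMeasure]
  {f : E → E} {f' : E → E →L[ℝ] E}

theorem MeasureTheory.ae_restrict_det_eq_zero_of_addHaar_image_eq_zero {s : Set E}
    (hs : MeasurableSet s) (hf' : ∀ x ∈ s, HasFDerivWithinAt f (f' x) s x) (hf : InjOn f s)
    (himage : μ (f '' s) = 0) :
    ∀ᵐ x ∂μ.restrict s, (f' x).det = 0 := by
  have hint := lintegral_abs_det_fderiv_le_addHaar_image μ hs hf' hf
  rw [himage, nonpos_iff_eq_zero, lintegral_eq_zero_iff'] at hint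
  · filter_upwards [hint] with x hx
    simpa using hx
  · exact (ContinuousLinearMap.continuous_det.measurable.comp_aemeasurable
      (aemeasurable_fderivWithin μ hs hf')).abs.ennreal_ofReal

theorem MeasureTheory.Measure.map_absolutelyContinuous_of_hasStrictFDerivAt
    (hf : ∀ x, HasStrictFDerivAt f (f' x) x) (hcrit : μ {x | (f' x).det = 0} = 0) :
    μ.map f ≪ μ := by
  have hfm : Measurable f := (continuous_iff_continuousAt.2 fun x => (hf x).continuousAt).measurable
  choose! u hu_open hu_mem hu_inj using
    fun x (hx : (f' x).det ≠ 0) => (hf x).exists_isOpen_injOn_of_det_ne_zero hx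
  obtain ⟨T, hTc, hT⟩ := TopologicalSpace.isOpen_iUnion_countable
    (fun x : {x // (f' x).det ≠ 0} => u x) fun x => hu_open x x.2
  refine Measure.AbsolutelyContinuous.mk fun A hA hA0 => ?_
  have hpiece (x) (_ : x ∈ T) : ∀ᵐ y ∂μ, y ∈ f ⁻¹' A ∩ u x → (f' y).det = 0 :=
    have hm := (hfm hA).inter (hu_open x x.2).measurableSet
    (ae_restrict_iff' hm).1 <| ae_restrict_det_eq_zero_of_addHaar_image_eq_zero μ hm
      (fun y _ => (hf y).hasFDerivAt.hasFDerivWithinAt) ((hu_inj x x.2).mono inter_subset_right)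
      (measure_mono_null ((image_preimage_inter f _ A).trans_subset inter_subset_left) hA0)
  rw [Measure.map_apply hfm hA, measure_eq_zero_iff_ae_notMem]
  filter_upwards [(ae_ball_iff hTc).2 hpiece, measure_eq_zero_iff_ae_notMem.1 hcrit]
    with y hy (hy' : (f' y).det ≠ 0) hyA
  have hyT : y ∈ ⋃ x ∈ T, u x := hT.symm ▸ mem_iUnion.2 ⟨⟨y, hy'⟩, hu_mem y hy'⟩
  obtain ⟨x, hxT, hyx⟩ := mem_iUnion₂.1 hyT
  exact hy' (hy x hxT ⟨hyA, hyx⟩)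

end Jacobian

namespace Complex

open ComplexConjugate

theorem hasStrictFDerivAt_const_mul_exp_mul_I {E : Type*} [NormedAddCommGroup E]
    [NormedSpace ℝ E] (a : ℂ) (L : E →L[ℝ] ℝ) (x : E) :
    HasStrictFDerivAt (fun x => a * exp (L x * I)) (L.smulRight (a * I * exp (L x * I))) x := by
  have := (((ofRealCLM.comp L).hasStrictFDerivAt (x := x)).mul_const I).cexp.const_mul a
  exact this.congr_fderiv (by ext; simp; ring)

theorem det_reCLM_smulRight_add_imCLM_smulRight (u v : ℂ) :
    (reCLM.smulRight u + imCLM.smulRight v).det = (conj u * v).im := by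
  rw [ContinuousLinearMap.det, ← LinearMap.det_toMatrix basisOneI, Matrix.det_fin_two]
  simp [LinearMap.toMatrix_apply, coe_basisOneI_repr]
  ring

theorem im_mul_exp_ofReal_mul_I (w : ℂ) (t : ℝ) :
    (w * exp (t * I)).im = ‖w‖ * Real.sin (arg w + t) := by
  conv_lhs => rw [← norm_mul_exp_arg_mul_I w]
  rw [mul_assoc, ← exp_add, ← add_mul, ← ofReal_add, im_ofReal_mul, exp_ofReal_mul_I_im]

theorem countable_setOf_im_mul_exp_ofReal_mul_I_eq_zero {w : ℂ} (hw : w ≠ 0) :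
    {t : ℝ | (w * exp (t * I)).im = 0}.Countable := by
  have : {t : ℝ | (w * exp (t * I)).im = 0} = range fun n : ℤ => n * π - arg w := by
    ext t
    simp only [mem_ofPred_eq, im_mul_exp_ofReal_mul_I, mul_eq_zero, norm_eq_zero, hw, false_or,
      Real.sin_eq_zero_iff, mem_range, sub_eq_iff_eq_add']
  exact this ▸ countable_range _

theorem volume_setOf_im_sub_re_mem_eq_zero {S : Set ℝ} (hS : S.Countable) :
    volume {z : ℂ | z.im - z.re ∈ S} = 0 := by
  have hm : MeasurableSet {p : ℝ × ℝ | p.2 - p.1 ∈ S} :=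
    (measurable_snd.sub measurable_fst) hS.measurableSet
  change volume (measurableEquivRealProd ⁻¹' {p : ℝ × ℝ | p.2 - p.1 ∈ S}) = 0
  rw [volume_preserving_equiv_real_prod.measure_preimage hm.nullMeasurableSet,
    Measure.volume_eq_prod, Measure.prod_apply hm]
  have hfiber (x : ℝ) : volume (Prod.mk x ⁻¹' {p : ℝ × ℝ | p.2 - p.1 ∈ S}) = 0 :=
    (hS.preimage (sub_left_injective (b := x))).measure_zero volume
  simp only [hfiber, lintegral_zero]

theorem map_volume_mul_exp_re_add_mul_exp_im_absolutelyContinuous {a₁ a₂ : ℂ} (ha₁ : a₁ ≠ 0)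
    (ha₂ : a₂ ≠ 0) :
    volume.map (fun z : ℂ => a₁ * exp (z.re * I) + a₂ * exp (z.im * I)) ≪ volume := by
  set f' : ℂ → ℂ →L[ℝ] ℂ := fun z =>
    reCLM.smulRight (a₁ * I * exp (z.re * I)) + imCLM.smulRight (a₂ * I * exp (z.im * I))
  have hf (z : ℂ) : HasStrictFDerivAt (fun z : ℂ => a₁ * exp (z.re * I) + a₂ * exp (z.im * I))
      (f' z) z :=
    (hasStrictFDerivAt_const_mul_exp_mul_I a₁ reCLM z).add
      (hasStrictFDerivAt_const_mul_exp_mul_I a₂ imCLM z)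
  have hdet (z : ℂ) : (f' z).det = (conj a₁ * a₂ * exp ((z.im - z.re : ℝ) * I)).im := by
    have hconj : exp (conj (z.re * I)) = (exp (z.re * I))⁻¹ := by
      rw [map_mul, conj_ofReal, conj_I, mul_neg, exp_neg]
    rw [det_reCLM_smulRight_add_imCLM_smulRight]
    congr 1
    rw [map_mul, map_mul, ← exp_conj, hconj, conj_I, ofReal_sub, sub_mul, exp_sub]
    field_simp
    linear_combination -conj a₁ * I_sq
  refine Measure.map_absolutelyContinuous_of_hasStrictFDerivAt volume hf ?_
  simp only [hdet]
  exact volume_setOf_im_sub_re_mem_eq_zero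
    (countable_setOf_im_mul_exp_ofReal_mul_I_eq_zero (by simp [ha₁, ha₂]))

end Complex

open Complex

instance isProbabilityMeasure_circleUniform : IsProbabilityMeasure circleUniform := by
  constructor
  rw [circleUniform, Measure.map_apply (by fun_prop) MeasurableSet.univ]
  simp only [Measure.smul_apply, preimage_univ, Measure.restrict_apply_univ, Real.volume_Ico,
    sub_zero, smul_eq_mul]
  exact ENNReal.inv_mul_cancel (by simp [Real.pi_pos]) ENNReal.ofReal_ne_top

theorem circleUniform_prod_absolutelyContinuous :
    circleUniform.prod circleUniform ≪
      volume.map fun z : ℂ => (exp (z.re * I), exp (z.im * I)) := by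
  have hg : Measurable fun θ : ℝ => exp (θ * I) := by fun_prop
  have hν : (ENNReal.ofReal (2 * π))⁻¹ • volume.restrict (Ico 0 (2 * π)) ≪ volume :=
    (Measure.absolutelyContinuous_of_le Measure.restrict_le_self).smul_left _
  have hvol : volume.map (fun z : ℂ => (exp (z.re * I), exp (z.im * I))) =
      (volume : Measure (ℝ × ℝ)).map
        (Prod.map (fun θ : ℝ => exp (θ * I)) fun θ : ℝ => exp (θ * I)) := by
    rw [← volume_preserving_equiv_real_prod.map_eq,
      Measure.map_map (hg.prodMap hg) measurableEquivRealProd.measurable]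
    rfl
  rw [circleUniform, Measure.map_prod_map _ _ hg hg, hvol, Measure.volume_eq_prod]
  exact (hν.prod hν).map (hg.prodMap hg)

/-- If `X₁, X₂` are independent and uniform on the unit circle and `a₁, a₂ ≠ 0`, then the
law of `a₁X₁ + a₂X₂` is absolutely continuous with respect to Lebesgue measure on `ℝ² ≅ ℂ`. -/
theorem two_fold_absolutely_continuous
    {Ω : Type*} [MeasurableSpace Ω] (P : Measure Ω) [IsProbabilityMeasure P]
    (X₁ X₂ : Ω → ℂ) (hindep : IndepFun X₁ X₂ P)
    (h₁ : Measure.map X₁ P = circleUniform)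
    (h₂ : Measure.map X₂ P = circleUniform)
    (a₁ a₂ : ℂ) (ha₁ : a₁ ≠ 0) (ha₂ : a₂ ≠ 0) :
    Measure.map (fun ω => a₁ * X₁ ω + a₂ * X₂ ω) P ≪ (volume : Measure ℂ) := by
  have hX₁ : AEMeasurable X₁ P := .of_map_ne_zero (h₁ ▸ IsProbabilityMeasure.ne_zero _)
  have hX₂ : AEMeasurable X₂ P := .of_map_ne_zero (h₂ ▸ IsProbabilityMeasure.ne_zero _)
  have hφ : Measurable fun p : ℂ × ℂ => a₁ * p.1 + a₂ * p.2 := by fun_prop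
  have hlaw : P.map (fun ω => a₁ * X₁ ω + a₂ * X₂ ω)
      = (circleUniform.prod circleUniform).map fun p => a₁ * p.1 + a₂ * p.2 := by
    have hpair := hindep.map_prod_eq_prod_map_map hX₁ hX₂
    rw [h₁, h₂] at hpair
    rw [← hpair, AEMeasurable.map_map_of_aemeasurable hφ.aemeasurable (hX₁.prodMk hX₂)]
    rfl
  rw [hlaw]
  refine (circleUniform_prod_absolutelyContinuous.map hφ).trans ?_
  rw [Measure.map_map hφ (by fun_prop)]
  exact map_volume_mul_exp_re_add_mul_exp_im_absolutelyContinuous ha₁ ha₂
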